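/- Let c₁, ..., c_K be positive reals with max_k cₖ² ≤ 2·min_k cₖ², and let X ∈ ℝ^{K×2} be the design matrix with rows (1, cₖ²) (assumed full column rank), P = I − X(XᵀX)⁻¹Xᵀ. Then ‖Diag(1/c₁, ..., 1/c_K)·P·c‖₂² ≤ K, where c = (c₁, ..., c_K)ᵀ. -/

import Mathlib

/-!
`P = 1 - X (XᵀX)⁻¹ Xᵀ` is the orthogonal projection onto the orthogonal complement of the
column space of `X`. Since the constant vector is a column of `X`, `P c = P (c - c_min)`, and a
projection does not increase length, so `‖P c‖² ≤ ∑ₖ (cₖ - c_min)² ≤ K c_min²`, the last step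
because `cₖ² ≤ 2 c_min²` forces `0 ≤ cₖ - c_min ≤ c_min`. Dividing the `k`-th coordinate by
`cₖ ≥ c_min` then gives the bound `K`.
-/

open Matrix

namespace Matrix

variable {m n 𝕜 : Type*} [Fintype m] [Fintype n]

theorem isUnit_of_rank_eq_card [Field 𝕜] [DecidableEq n] {A : Matrix n n 𝕜}
    (h : A.rank = Fintype.card n) : IsUnit A := by
  have hrange : LinearMap.range A.mulVecLin = ⊤ :=
    Submodule.eq_top_of_finrank_eq (by simpa [rank] using h)
  exact mulVec_surjective_iff_isUnit.mp (LinearMap.range_eq_top.mp hrange)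

theorem isUnit_transpose_mul_self_of_rank_eq_card [Field 𝕜] [LinearOrder 𝕜]
    [IsStrictOrderedRing 𝕜] [DecidableEq n] {X : Matrix m n 𝕜}
    (h : X.rank = Fintype.card n) : IsUnit (Xᵀ * X) :=
  isUnit_of_rank_eq_card (by rw [rank_transpose_mul_self, h])

noncomputable def residualMaker [CommRing 𝕜] [DecidableEq m] [DecidableEq n]
    (X : Matrix m n 𝕜) : Matrix m m 𝕜 :=
  1 - X * (Xᵀ * X)⁻¹ * Xᵀ

section residualMaker

variable [CommRing 𝕜] [DecidableEq m] [DecidableEq n] (X : Matrix m n 𝕜)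

theorem residualMaker_transpose : (residualMaker X)ᵀ = residualMaker X := by
  rw [residualMaker, transpose_sub, transpose_one, transpose_mul, transpose_mul,
    transpose_transpose, transpose_nonsing_inv, transpose_mul, transpose_transpose,
    Matrix.mul_assoc]

variable {X}

theorem residualMaker_mul_self (h : IsUnit (Xᵀ * X).det) : residualMaker X * X = 0 := by
  rw [residualMaker, Matrix.sub_mul, Matrix.one_mul, Matrix.mul_assoc, Matrix.mul_assoc,
    nonsing_inv_mul _ h, Matrix.mul_one, sub_self]

theorem isIdempotentElem_residualMaker (h : IsUnit (Xᵀ * X).det) :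
    IsIdempotentElem (residualMaker X) := by
  rw [IsIdempotentElem]
  nth_rewrite 2 [residualMaker]
  rw [Matrix.mul_sub, Matrix.mul_one, ← Matrix.mul_assoc, ← Matrix.mul_assoc,
    residualMaker_mul_self h, Matrix.zero_mul, Matrix.zero_mul, sub_zero]

theorem residualMaker_mulVec_sub_mulVec (h : IsUnit (Xᵀ * X).det) (v : m → 𝕜) (x : n → 𝕜) :
    residualMaker X *ᵥ (v - X *ᵥ x) = residualMaker X *ᵥ v := by
  rw [mulVec_sub, mulVec_mulVec, residualMaker_mul_self h, zero_mulVec, sub_zero]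

end residualMaker

theorem dotProduct_mulVec_self_le_of_isIdempotentElem [CommRing 𝕜] [LinearOrder 𝕜]
    [IsStrictOrderedRing 𝕜] {P : Matrix m m 𝕜} (hsymm : Pᵀ = P) (hidem : IsIdempotentElem P)
    (w : m → 𝕜) : (P *ᵥ w) ⬝ᵥ (P *ᵥ w) ≤ w ⬝ᵥ w := by
  have hcross : (P *ᵥ w) ⬝ᵥ (P *ᵥ w) = w ⬝ᵥ (P *ᵥ w) := by
    conv_lhs => enter [1]; rw [← hsymm, ← vecMul_transpose, transpose_transpose]
    rw [← dotProduct_mulVec, mulVec_mulVec, hidem.eq]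
  have hres : 0 ≤ (w - P *ᵥ w) ⬝ᵥ (w - P *ᵥ w) :=
    Finset.sum_nonneg fun i _ => mul_self_nonneg _
  rw [sub_dotProduct, dotProduct_sub, dotProduct_sub, dotProduct_comm (P *ᵥ w) w, hcross] at hres
  linarith

end Matrix

theorem sum_inv_mul_sq_le_dotProduct_div {ι 𝕜 : Type*} [Fintype ι] [Field 𝕜] [LinearOrder 𝕜]
    [IsStrictOrderedRing 𝕜] (u c : ι → 𝕜) {a : 𝕜} (ha : 0 < a) (hac : ∀ k, a ≤ c k) :
    ∑ k, ((c k)⁻¹ * u k) ^ 2 ≤ (u ⬝ᵥ u) / a ^ 2 := by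
  rw [dotProduct, Finset.sum_div]
  gcongr with k
  rw [mul_pow, inv_pow, inv_mul_eq_div, sq (u k)]
  exact div_le_div_of_nonneg_left (mul_self_nonneg _) (by positivity) (by gcongr; exact hac k)

theorem sub_sq_le_sq_of_sq_le_two_mul_sq {𝕜 : Type*} [CommRing 𝕜] [LinearOrder 𝕜]
    [IsStrictOrderedRing 𝕜] {a b : 𝕜} (ha : 0 ≤ a) (hab : a ≤ b) (h : b ^ 2 ≤ 2 * a ^ 2) :
    (b - a) ^ 2 ≤ a ^ 2 := by
  nlinarith [mul_le_mul_of_nonneg_left hab ha]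

/-- Variance-reduction condition `q ≤ K`: if `c₁,...,c_K > 0` with
`max cₖ² ≤ 2 min cₖ²`, `X` is the design matrix with rows `(1, cₖ²)` (full column
rank), and `P = I − X(XᵀX)⁻¹Xᵀ`, then `‖Diag(1/c₁,...,1/c_K) P c‖₂² ≤ K`. -/
theorem stmt12 (K : ℕ) (c : Fin K → ℝ) (hc : ∀ k, 0 < c k)
    (hminmax : ∀ i j, (c i) ^ 2 ≤ 2 * (c j) ^ 2)
    (X : Matrix (Fin K) (Fin 2) ℝ)
    (hX : X = Matrix.of fun k j => if j = 0 then (1 : ℝ) else (c k) ^ 2)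
    (hrank : X.rank = 2) :
    ∑ k, ((c k)⁻¹ *
        (((1 : Matrix (Fin K) (Fin K) ℝ) - X * (Xᵀ * X)⁻¹ * Xᵀ).mulVec c k)) ^ 2
      ≤ (K : ℝ) := by
  have hG : IsUnit (Xᵀ * X).det := (isUnit_iff_isUnit_det _).mp
    (isUnit_transpose_mul_self_of_rank_eq_card (by simpa using hrank))
  have hK : 2 ≤ K := by simpa [hrank] using X.rank_le_card_height
  have : Nonempty (Fin K) := ⟨⟨0, by omega⟩⟩
  obtain ⟨k₀, hk₀⟩ := Finite.exists_min c
  set a := c k₀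
  have hconst : X *ᵥ ![a, 0] = fun _ => a := by
    subst hX; ext k; simp [mulVec, dotProduct, Fin.sum_univ_two]
  have hw : (c - fun _ => a) ⬝ᵥ (c - fun _ => a) ≤ K * a ^ 2 := by
    simpa [dotProduct, ← sq] using Finset.sum_le_card_nsmul Finset.univ _ (a ^ 2) fun k _ =>
      sub_sq_le_sq_of_sq_le_two_mul_sq (hc k₀).le (hk₀ k) (hminmax k k₀)
  calc ∑ k, ((c k)⁻¹ * (residualMaker X *ᵥ c) k) ^ 2
      ≤ (residualMaker X *ᵥ c) ⬝ᵥ (residualMaker X *ᵥ c) / a ^ 2 :=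
        sum_inv_mul_sq_le_dotProduct_div _ _ (hc k₀) hk₀
    _ ≤ (c - fun _ => a) ⬝ᵥ (c - fun _ => a) / a ^ 2 := by
        rw [← residualMaker_mulVec_sub_mulVec hG c ![a, 0], hconst]
        gcongr
        exact dotProduct_mulVec_self_le_of_isIdempotentElem (residualMaker_transpose X)
          (isIdempotentElem_residualMaker hG) _
    _ ≤ K * a ^ 2 / a ^ 2 := by gcongr
    _ = K := mul_div_cancel_right₀ _ (pow_pos (hc k₀) 2).ne'
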